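/- Suppose A ≥ e, A ∈ S, x₀ ∈ S with 1 ≤ x₀ < A and x ≤ x₀ for every x ∈ S with x ≠ A. Let m(k) = Σ_{x∈S} x·p(x)·P_{Y|X}(k|x)/P_Y(k) be the posterior mean and let Ȳ be a Poisson(x₀) random variable. Assume: (i) the second-order optimality condition Σ_{k∈ℕ} ℙ[Ȳ = k]·log m(k+1) ≥ log x₀ + 1/x₀; and (ii) β ∈ (0, 1/4] satisfies Σ_{x∈S, x<1} p(x) + p(A) ≤ 3β. Then p(A) ≥ (1 − 3β) / ( 2·A^{2Ae·log A + 2} · e^{−2A+1} ). -/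

import Mathlib

open Real

/-- Poisson channel pmf: `P_{Y|X}(y|x) = x^y e^{-x} / y!` (with `0^0 = 1`, `0! = 1`). -/
noncomputable def poissonPMF (x : ℝ) (y : ℕ) : ℝ := x ^ y * Real.exp (-x) / (Nat.factorial y)

/-- Output pmf induced by a finitely supported input: `P_Y(k) = Σ_{x ∈ S} p(x) x^k e^{-x}/k!`. -/
noncomputable def outPMF (S : Finset ℝ) (p : ℝ → ℝ) (k : ℕ) : ℝ :=
  ∑ x ∈ S, p x * poissonPMF x k

/-- Posterior mean of the input given output `k`:
`m(k) = Σ_{x ∈ S} x p(x) P_{Y|X}(k|x) / P_Y(k)`. -/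
noncomputable def postMean (S : Finset ℝ) (p : ℝ → ℝ) (k : ℕ) : ℝ :=
  ∑ x ∈ S, x * p x * poissonPMF x k / outPMF S p k

/-!
Every support point other than `A` is at most `x₀`, and the points `≥ 1` carry mass
`μ ≥ 1 - 3β`, so `P_Y(k) ≥ μ e^{-A} / k!` and the posterior mean obeys `m(k) ≤ A` and
`m(k) ≤ x₀ + c A^k` with `c = A p(A) / μ`. In the second-order condition this gives
`1/x₀ ≤ c A^K + log A · ℙ[Ȳ ≥ K]`. For `K ≥ 2x₀` the Poisson tail is at most `2 ℙ[Ȳ = K]`,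
and for `K ≥ eA` the bounds `K! ≥ (K/e)^K` and `4 A log A ≤ e^A` make
`4 x₀ log A · ℙ[Ȳ = K] ≤ 1`. Hence `c A^K ≥ 1/(2x₀)`, i.e. `p(A) ≥ μ / (2 x₀ A^{K+1})`,
and `K = ⌈2A(e log A - 1)⌉` turns this into the stated bound.
-/

open Finset
open scoped Nat

lemma poissonPMF_nonneg {x : ℝ} (hx : 0 ≤ x) (k : ℕ) : 0 ≤ poissonPMF x k := by
  unfold poissonPMF
  positivity

lemma poissonPMF_succ (x : ℝ) (k : ℕ) :
    poissonPMF x (k + 1) = poissonPMF x k * (x / (k + 1)) := by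
  simp only [poissonPMF, Nat.factorial_succ, pow_succ, Nat.cast_mul, Nat.cast_succ]
  field_simp

lemma hasSum_poissonPMF (x : ℝ) : HasSum (poissonPMF x) 1 := by
  have h := (NormedSpace.expSeries_div_hasSum_exp x).mul_right (exp (-x))
  rw [← Real.exp_eq_exp_ℝ, ← exp_add, add_neg_cancel, exp_zero] at h
  have hfun : poissonPMF x = fun k => x ^ k / k ! * exp (-x) := by
    funext k
    rw [poissonPMF, div_mul_eq_mul_div]
  rwa [hfun]

lemma poissonPMF_nat_add_le {x : ℝ} {K : ℕ} (hx : 0 ≤ x) (hK : 2 * x ≤ K) (j : ℕ) :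
    poissonPMF x (j + K) ≤ poissonPMF x K * (1 / 2) ^ j := by
  induction j with
  | zero => simp
  | succ j ih =>
    have hratio : x / ((j + K : ℕ) + 1 : ℝ) ≤ 1 / 2 := by
      rw [div_le_iff₀ (by positivity)]
      push_cast
      linarith [(j.cast_nonneg : (0 : ℝ) ≤ j)]
    calc poissonPMF x (j + 1 + K) = poissonPMF x (j + K) * (x / ((j + K : ℕ) + 1)) := by
          rw [Nat.add_right_comm, poissonPMF_succ]
      _ ≤ poissonPMF x K * (1 / 2) ^ j * (1 / 2) :=
          mul_le_mul ih hratio (by positivity)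
            (mul_nonneg (poissonPMF_nonneg hx K) (by positivity))
      _ = poissonPMF x K * (1 / 2) ^ (j + 1) := by ring

lemma tsum_poissonPMF_nat_add_le {x : ℝ} {K : ℕ} (hx : 0 ≤ x) (hK : 2 * x ≤ K) :
    ∑' j, poissonPMF x (j + K) ≤ 2 * poissonPMF x K := by
  calc ∑' j, poissonPMF x (j + K) ≤ ∑' j : ℕ, poissonPMF x K * (1 / 2) ^ j :=
        Summable.tsum_le_tsum (poissonPMF_nat_add_le hx hK)
          ((summable_nat_add_iff K).2 (hasSum_poissonPMF x).summable)
          (summable_geometric_two.mul_left _)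
    _ = 2 * poissonPMF x K := by rw [tsum_mul_left, tsum_geometric_two, mul_comm]

lemma pow_mul_exp_neg_le_pow_mul_exp_neg {x y : ℝ} {n : ℕ} (hx : 0 ≤ x) (hxy : x ≤ y)
    (hyn : y ≤ n) : x ^ n * exp (-x) ≤ y ^ n * exp (-y) := by
  rcases (hx.trans hxy).eq_or_lt with rfl | hy
  · rw [le_antisymm hxy hx]
  have hexp : (x / y) ^ n ≤ exp (x - y) := by
    have hslope : n * (x / y - 1) ≤ x - y := by
      have : (x - y) * (n / y) ≤ (x - y) * 1 :=
        mul_le_mul_of_nonpos_left ((one_le_div hy).2 hyn) (by linarith)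
      calc n * (x / y - 1) = (x - y) * (n / y) := by field_simp
        _ ≤ x - y := by linarith
    calc (x / y) ^ n ≤ exp (x / y - 1) ^ n :=
          pow_le_pow_left₀ (by positivity) (by linarith [add_one_le_exp (x / y - 1)]) n
      _ = exp (n * (x / y - 1)) := (exp_nat_mul _ n).symm
      _ ≤ exp (x - y) := exp_le_exp.2 hslope
  calc x ^ n * exp (-x) = y ^ n * (x / y) ^ n * exp (-x) := by
        rw [← mul_pow, mul_div_cancel₀ x hy.ne']
    _ ≤ y ^ n * exp (x - y) * exp (-x) := by gcongr
    _ = y ^ n * exp (-y) := by rw [mul_assoc, ← exp_add]; ring_nf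

lemma pow_le_factorial_of_exp_one_mul_le {a : ℝ} {n : ℕ} (ha : 0 ≤ a) (h : exp 1 * a ≤ n) :
    a ^ n ≤ n ! := by
  have key : (exp 1 * a) ^ n ≤ exp 1 ^ n * n ! :=
    calc (exp 1 * a) ^ n ≤ (n : ℝ) ^ n := pow_le_pow_left₀ (by positivity) h n
      _ ≤ exp n * n ! :=
          (div_le_iff₀ (by positivity)).1 (pow_div_factorial_le_exp _ n.cast_nonneg n)
      _ = exp 1 ^ n * n ! := by rw [← exp_nat_mul, mul_one]
  rw [mul_pow] at key
  exact le_of_mul_le_mul_left key (by positivity)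

lemma four_mul_log_mul_le_exp {A : ℝ} (hA : exp 1 ≤ A) : 4 * log A * A ≤ exp A := by
  have hA0 : 0 < A := (exp_pos 1).trans_le hA
  have hu : 1 ≤ log A := by rwa [le_log_iff_exp_le hA0]
  have hlog4 : log 4 < 7 / 5 := by
    have := log_two_lt_d9
    rw [show (4 : ℝ) = 2 ^ 2 by norm_num, log_pow]
    push_cast
    linarith
  have hloglog : log (log A) ≤ log A - 1 := log_le_sub_one_of_pos (by linarith)
  have hlogA : log A ≤ A / exp 1 := by
    have := log_le_sub_one_of_pos (div_pos hA0 (exp_pos 1))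
    rwa [log_div hA0.ne' (exp_pos 1).ne', log_exp, sub_le_sub_iff_right] at this
  have hAe : A / exp 1 ≤ A / (27 / 10) :=
    div_le_div_of_nonneg_left hA0.le (by norm_num) (by linarith [exp_one_gt_d9])
  calc 4 * log A * A = exp (log 4 + log (log A) + log A) := by
        rw [exp_add, exp_add, exp_log (by norm_num), exp_log (by linarith), exp_log hA0]
    _ ≤ exp A := exp_le_exp.2 (by linarith [exp_one_gt_d9])

lemma four_mul_log_mul_mul_poissonPMF_le_one {x A : ℝ} {K : ℕ} (hx : 0 ≤ x) (hxA : x ≤ A)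
    (hA : exp 1 ≤ A) (hK : exp 1 * A ≤ K) : 4 * log A * (x * poissonPMF x K) ≤ 1 := by
  have hA0 : 0 < A := (exp_pos 1).trans_le hA
  have hlog : 0 ≤ log A := log_nonneg (by linarith [exp_one_gt_d9])
  have hK1 : A ≤ (K + 1 : ℕ) := by
    push_cast
    nlinarith [exp_one_gt_d9]
  calc 4 * log A * (x * poissonPMF x K) = 4 * log A * (x ^ (K + 1) * exp (-x)) / K ! := by
        rw [poissonPMF, pow_succ]
        ring
    _ ≤ 4 * log A * (A ^ (K + 1) * exp (-A)) / K ! := by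
        have := pow_mul_exp_neg_le_pow_mul_exp_neg hx hxA hK1
        gcongr
    _ = 4 * log A * A / exp A * (A ^ K / K !) := by
        rw [exp_neg, pow_succ]
        ring
    _ ≤ 1 := mul_le_one₀ ((div_le_one (exp_pos A)).2 (four_mul_log_mul_le_exp hA))
        (by positivity)
        ((div_le_one (by positivity)).2 (pow_le_factorial_of_exp_one_mul_le hA0.le hK))

lemma exp_neg_div_factorial_le_poissonPMF {x A : ℝ} (hx : 1 ≤ x) (hxA : x ≤ A) (k : ℕ) :
    exp (-A) / k ! ≤ poissonPMF x k := by
  unfold poissonPMF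
  gcongr
  calc exp (-A) = 1 * exp (-A) := (one_mul _).symm
    _ ≤ x ^ k * exp (-x) :=
        mul_le_mul (one_le_pow₀ hx) (exp_le_exp.2 (neg_le_neg hxA)) (exp_pos _).le (by positivity)

section Posterior

variable {S : Finset ℝ} {p : ℝ → ℝ}

lemma postMean_eq_div (S : Finset ℝ) (p : ℝ → ℝ) (k : ℕ) :
    postMean S p k = (∑ x ∈ S, x * p x * poissonPMF x k) / outPMF S p k := by
  rw [postMean, sum_div]

lemma outPMF_pos {a : ℝ} (hS : ∀ x ∈ S, 0 ≤ x) (hp : ∀ x ∈ S, 0 ≤ p x) (ha : a ∈ S)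
    (ha0 : 0 < a) (hpa : 0 < p a) (k : ℕ) : 0 < outPMF S p k :=
  sum_pos' (fun x hx => mul_nonneg (hp x hx) (poissonPMF_nonneg (hS x hx) k))
    ⟨a, ha, by unfold poissonPMF; positivity⟩

lemma postMean_pos {a : ℝ} (hS : ∀ x ∈ S, 0 ≤ x) (hp : ∀ x ∈ S, 0 ≤ p x) (ha : a ∈ S)
    (ha0 : 0 < a) (hpa : 0 < p a) (k : ℕ) : 0 < postMean S p k := by
  rw [postMean_eq_div]
  refine div_pos ?_ (outPMF_pos hS hp ha ha0 hpa k)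
  exact sum_pos' (fun x hx => mul_nonneg (mul_nonneg (hS x hx) (hp x hx))
    (poissonPMF_nonneg (hS x hx) k)) ⟨a, ha, by unfold poissonPMF; positivity⟩

lemma postMean_le {b : ℝ} {k : ℕ} (hS : ∀ x ∈ S, 0 ≤ x) (hp : ∀ x ∈ S, 0 ≤ p x)
    (hout : 0 < outPMF S p k) (hle : ∀ x ∈ S, x ≤ b) : postMean S p k ≤ b := by
  rw [postMean_eq_div, div_le_iff₀ hout, outPMF, mul_sum]
  refine sum_le_sum fun x hx => ?_
  rw [mul_assoc]
  exact mul_le_mul_of_nonneg_right (hle x hx) (mul_nonneg (hp x hx) (poissonPMF_nonneg (hS x hx) k))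

lemma postMean_le_add {a b : ℝ} {k : ℕ} (hS : ∀ x ∈ S, 0 ≤ x) (hp : ∀ x ∈ S, 0 ≤ p x)
    (hout : 0 < outPMF S p k) (ha : a ∈ S) (hb : 0 ≤ b) (hle : ∀ x ∈ S, x ≠ a → x ≤ b) :
    postMean S p k ≤ b + a * (p a * poissonPMF a k) / outPMF S p k := by
  have hw : ∀ x ∈ S, 0 ≤ p x * poissonPMF x k :=
    fun x hx => mul_nonneg (hp x hx) (poissonPMF_nonneg (hS x hx) k)
  have hrest : ∑ x ∈ S.erase a, x * p x * poissonPMF x k ≤ b * outPMF S p k :=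
    calc ∑ x ∈ S.erase a, x * p x * poissonPMF x k
        ≤ ∑ x ∈ S.erase a, b * (p x * poissonPMF x k) := sum_le_sum fun x hx => by
          rw [mul_assoc]
          exact mul_le_mul_of_nonneg_right (hle x (mem_of_mem_erase hx) (ne_of_mem_erase hx))
            (hw x (mem_of_mem_erase hx))
      _ ≤ ∑ x ∈ S, b * (p x * poissonPMF x k) :=
          sum_le_sum_of_subset_of_nonneg (erase_subset a S) fun x hx _ => mul_nonneg hb (hw x hx)
      _ = b * outPMF S p k := by rw [outPMF, mul_sum]
  rw [postMean_eq_div, ← add_sum_erase S _ ha, ← mul_div_cancel_right₀ b hout.ne', ← add_div]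
  exact div_le_div_of_nonneg_right (by linarith [mul_assoc a (p a) (poissonPMF a k)]) hout.le

lemma mass_mul_exp_neg_div_factorial_le_outPMF {A : ℝ} (hS : (S : Set ℝ) ⊆ Set.Icc 0 A)
    (hp : ∀ x ∈ S, 0 ≤ p x) (k : ℕ) :
    (∑ x ∈ S with 1 ≤ x, p x) * (exp (-A) / k !) ≤ outPMF S p k := by
  rw [sum_mul, outPMF]
  calc ∑ x ∈ S with 1 ≤ x, p x * (exp (-A) / k !) ≤ ∑ x ∈ S with 1 ≤ x, p x * poissonPMF x k :=
        sum_le_sum fun x hx => by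
          rw [mem_filter] at hx
          exact mul_le_mul_of_nonneg_left
            (exp_neg_div_factorial_le_poissonPMF hx.2 (hS hx.1).2 k) (hp x hx.1)
    _ ≤ ∑ x ∈ S, p x * poissonPMF x k :=
        sum_le_sum_of_subset_of_nonneg (filter_subset _ _)
          fun x hx _ => mul_nonneg (hp x hx) (poissonPMF_nonneg (hS hx).1 k)

lemma postMean_le_add_mul_pow {A x₀ : ℝ} (hS : (S : Set ℝ) ⊆ Set.Icc 0 A)
    (hp : ∀ x ∈ S, 0 ≤ p x) (hμ : 0 < ∑ x ∈ S with 1 ≤ x, p x) (hAS : A ∈ S) (hx₀ : 0 ≤ x₀)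
    (hle : ∀ x ∈ S, x ≠ A → x ≤ x₀) (k : ℕ) :
    postMean S p k ≤ x₀ + A * p A / (∑ x ∈ S with 1 ≤ x, p x) * A ^ k := by
  set μ := ∑ x ∈ S with 1 ≤ x, p x
  have hS0 : ∀ x ∈ S, 0 ≤ x := fun x hx => (hS hx).1
  have hlow := mass_mul_exp_neg_div_factorial_le_outPMF hS hp k
  have hlow0 : 0 < μ * (exp (-A) / k !) := by positivity
  calc postMean S p k ≤ x₀ + A * (p A * poissonPMF A k) / outPMF S p k :=
        postMean_le_add hS0 hp (hlow0.trans_le hlow) hAS hx₀ hle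
    _ ≤ x₀ + A * (p A * poissonPMF A k) / (μ * (exp (-A) / k !)) := by
        gcongr
        exact mul_nonneg (hS0 A hAS) (mul_nonneg (hp A hAS) (poissonPMF_nonneg (hS0 A hAS) k))
    _ = x₀ + A * p A / μ * A ^ k := by
        rw [poissonPMF]
        field_simp

end Posterior

lemma log_add_le_log_add {x t : ℝ} (hx : 1 ≤ x) (ht : 0 ≤ t) : log (x + t) ≤ log x + t := by
  have hx0 : 0 < x := by linarith
  have hlog := log_le_sub_one_of_pos (show 0 < (x + t) / x by positivity)
  rw [log_div (by linarith) hx0.ne', add_div, div_self hx0.ne', add_sub_cancel_left] at hlog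
  linarith [div_le_self ht hx]

lemma tsum_mul_le_add_mul_tsum_nat_add {q g : ℕ → ℝ} {a b : ℝ} {K : ℕ} (hq : HasSum q 1)
    (hq0 : ∀ k, 0 ≤ q k) (ha : 0 ≤ a) (hlt : ∀ k < K, g k ≤ a) (hge : ∀ j, g (j + K) ≤ b)
    (hs : Summable fun k => q k * g k) :
    ∑' k, q k * g k ≤ a + b * ∑' j, q (j + K) := by
  rw [← hs.sum_add_tsum_nat_add K, ← tsum_mul_left]
  refine add_le_add ?_ ?_
  · calc ∑ k ∈ range K, q k * g k ≤ ∑ k ∈ range K, q k * a :=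
          sum_le_sum fun k hk => mul_le_mul_of_nonneg_left (hlt k (mem_range.1 hk)) (hq0 k)
      _ = (∑ k ∈ range K, q k) * a := (sum_mul _ _ _).symm
      _ ≤ 1 * a := mul_le_mul_of_nonneg_right (sum_le_hasSum _ (fun k _ => hq0 k) hq) ha
      _ = a := one_mul a
  · exact Summable.tsum_le_tsum
      (fun j => by rw [mul_comm b]; exact mul_le_mul_of_nonneg_left (hge j) (hq0 _))
      ((summable_nat_add_iff K).2 hs) (((summable_nat_add_iff K).2 hq.summable).mul_left b)

lemma one_div_le_mul_pow_add_log_mul_tsum {m : ℕ → ℝ} {A x₀ c : ℝ} (K : ℕ) (hA : 1 ≤ A)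
    (hx₀ : 1 ≤ x₀) (hc : 0 ≤ c) (hm0 : ∀ k, 0 < m k) (hmA : ∀ k, m k ≤ A)
    (hmx : ∀ k, m k ≤ x₀ + c * A ^ k)
    (hopt : log x₀ + 1 / x₀ ≤ ∑' k : ℕ, poissonPMF x₀ k * log (m (k + 1))) :
    1 / x₀ ≤ c * A ^ K + log A * ∑' j, poissonPMF x₀ (j + K) := by
  have hx₀0 : 0 < x₀ := by linarith
  have hlt : ∀ k < K, log (m (k + 1)) ≤ log x₀ + c * A ^ K := fun k hk =>
    calc log (m (k + 1)) ≤ log (x₀ + c * A ^ (k + 1)) := log_le_log (hm0 _) (hmx _)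
      _ ≤ log x₀ + c * A ^ (k + 1) := log_add_le_log_add hx₀ (by positivity)
      _ ≤ log x₀ + c * A ^ K := by gcongr; exact hk
  have hs : Summable fun k => poissonPMF x₀ k * log (m (k + 1)) := by
    by_contra h
    rw [tsum_eq_zero_of_not_summable h] at hopt
    linarith [log_nonneg hx₀, one_div_pos.2 hx₀0]
  have hsplit := tsum_mul_le_add_mul_tsum_nat_add (hasSum_poissonPMF x₀)
    (poissonPMF_nonneg hx₀0.le) (by positivity [log_nonneg hx₀]) hlt
    (fun j => log_le_log (hm0 _) (hmA _)) hs
  linarith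

lemma mass_ge_one_le_two_mul_pow_mul {A x₀ : ℝ} {S : Finset ℝ} {p : ℝ → ℝ} {K : ℕ}
    (hA : exp 1 ≤ A) (hS : (S : Set ℝ) ⊆ Set.Icc 0 A) (hp : ∀ x ∈ S, 0 < p x) (hAS : A ∈ S)
    (hx₀1 : 1 ≤ x₀) (hx₀A : x₀ ≤ A) (hle : ∀ x ∈ S, x ≠ A → x ≤ x₀)
    (hopt : log x₀ + 1 / x₀ ≤ ∑' k : ℕ, poissonPMF x₀ k * log (postMean S p (k + 1)))
    (hK : exp 1 * A ≤ K) :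
    ∑ x ∈ S with 1 ≤ x, p x ≤ 2 * x₀ * A ^ (K + 1) * p A := by
  set μ := ∑ x ∈ S with 1 ≤ x, p x
  have hA1 : 1 ≤ A := by linarith [exp_one_gt_d9]
  have hA0 : 0 < A := by linarith
  have hx₀0 : 0 < x₀ := by linarith
  have hS0 : ∀ x ∈ S, 0 ≤ x := fun x hx => (hS hx).1
  have hp0 : ∀ x ∈ S, 0 ≤ p x := fun x hx => (hp x hx).le
  have hμ : 0 < μ := (hp A hAS).trans_le <|
    single_le_sum (fun x hx => hp0 x (mem_filter.1 hx).1) (mem_filter.2 ⟨hAS, hA1⟩)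
  have hinv := one_div_le_mul_pow_add_log_mul_tsum K hA1 hx₀1
    (div_nonneg (mul_nonneg hA0.le (hp0 A hAS)) hμ.le)
    (postMean_pos hS0 hp0 hAS hA0 (hp A hAS))
    (fun k => postMean_le hS0 hp0 (outPMF_pos hS0 hp0 hAS hA0 (hp A hAS) k) fun x hx => (hS hx).2)
    (postMean_le_add_mul_pow hS hp0 hμ hAS hx₀0.le hle) hopt
  have htail := tsum_poissonPMF_nat_add_le hx₀0.le (K := K) (by nlinarith [exp_one_gt_d9])
  have hfar := four_mul_log_mul_mul_poissonPMF_le_one hx₀0.le hx₀A hA hK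
  have hhalf : 1 / 2 ≤ x₀ * A ^ (K + 1) * p A / μ := by
    have := mul_le_mul_of_nonneg_left
      (hinv.trans (add_le_add_right (mul_le_mul_of_nonneg_left htail (log_nonneg hA1)) _)) hx₀0.le
    have hc : x₀ * (A * p A / μ * A ^ K) = x₀ * A ^ (K + 1) * p A / μ := by ring
    have hq : x₀ * (log A * (2 * poissonPMF x₀ K)) = 4 * log A * (x₀ * poissonPMF x₀ K) / 2 := by
      ring
    rw [mul_one_div_cancel hx₀0.ne', mul_add, hc, hq] at this
    linarith
  rw [le_div_iff₀ hμ] at hhalf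
  linarith

lemma two_mul_mul_pow_le {A x₀ : ℝ} {K : ℕ} (hA : exp 1 ≤ A) (hx₀A : x₀ ≤ A)
    (hK : K ≤ 2 * A * (exp 1 * log A - 1) + 1) :
    2 * x₀ * A ^ (K + 1) ≤ 2 * A ^ (2 * A * exp 1 * log A + 2) * exp (-(2 * A) + 1) := by
  have hA0 : 0 < A := (exp_pos 1).trans_le hA
  have hu : 1 ≤ log A := by rwa [le_log_iff_exp_le hA0]
  have hexp : ((K : ℝ) + 2) * log A ≤ (2 * A * exp 1 * log A + 2) * log A + (-(2 * A) + 1) := by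
    nlinarith [mul_le_mul_of_nonneg_right hK (by linarith : (0 : ℝ) ≤ log A),
      mul_nonneg (by linarith : (0 : ℝ) ≤ log A - 1)
        (by linarith [exp_one_gt_d9] : (0 : ℝ) ≤ 2 * A - 1)]
  have hKpow : exp (((K : ℝ) + 2) * log A) = A ^ (K + 2) := by
    rw [show ((K : ℝ) + 2) = ((K + 2 : ℕ) : ℝ) by push_cast; ring, exp_nat_mul, exp_log hA0]
  calc 2 * x₀ * A ^ (K + 1) ≤ 2 * A * A ^ (K + 1) := by gcongr
    _ = 2 * exp (((K : ℝ) + 2) * log A) := by rw [hKpow]; ring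
    _ ≤ 2 * exp ((2 * A * exp 1 * log A + 2) * log A + (-(2 * A) + 1)) := by gcongr
    _ = 2 * A ^ (2 * A * exp 1 * log A + 2) * exp (-(2 * A) + 1) := by
        rw [rpow_def_of_pos hA0, exp_add, mul_comm (log A)]
        ring

theorem mass_at_A_explicit_lower_bound_general
    (A : ℝ) (hA : Real.exp 1 ≤ A) (S : Finset ℝ) (hS : (S : Set ℝ) ⊆ Set.Icc 0 A)
    (p : ℝ → ℝ) (hp : ∀ x ∈ S, 0 < p x) (hpsum : ∑ x ∈ S, p x = 1)
    (hAS : A ∈ S) (x₀ : ℝ) (hx₀1 : 1 ≤ x₀) (hx₀A : x₀ < A)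
    (hsecond : ∀ x ∈ S, x ≠ A → x ≤ x₀)
    (hopt : Real.log x₀ + 1 / x₀ ≤
      ∑' k : ℕ, poissonPMF x₀ k * Real.log (postMean S p (k + 1)))
    (β : ℝ)
    (hβsum : (∑ x ∈ S, if x < 1 then p x else 0) + p A ≤ 3 * β) :
    (1 - 3 * β) /
        (2 * A ^ (2 * A * Real.exp 1 * Real.log A + 2) * Real.exp (-(2 * A) + 1))
      ≤ p A := by
  set μ := ∑ x ∈ S with 1 ≤ x, p x
  -- `eA ≤ K` drives the tail estimate, `K ≤ 2A(e log A - 1) + 1` the exponent of the bound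
  set K := ⌈2 * A * (exp 1 * log A - 1)⌉₊
  have hA0 : 0 < A := (exp_pos 1).trans_le hA
  have hu : 1 ≤ log A := by rwa [le_log_iff_exp_le hA0]
  have hKA : exp 1 * A ≤ 2 * A * (exp 1 * log A - 1) := by
    have he : exp 1 ≤ 2 * (exp 1 * log A - 1) := by
      linarith [le_mul_of_one_le_right (exp_pos 1).le hu, exp_one_gt_d9]
    linarith [mul_le_mul_of_nonneg_left he hA0.le]
  have hmass : 1 - 3 * β ≤ μ := by
    have hsplit := sum_filter_add_sum_filter_not S (fun x => x < 1) p
    simp only [not_lt] at hsplit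
    linarith [sum_filter (s := S) (fun x => x < 1) p, hp A hAS]
  have hbound := mass_ge_one_le_two_mul_pow_mul hA hS hp hAS hx₀1 hx₀A.le hsecond hopt
    (hKA.trans (Nat.le_ceil _))
  have hden := two_mul_mul_pow_le hA hx₀A.le
    (Nat.ceil_lt_add_one ((by positivity : 0 ≤ exp 1 * A).trans hKA)).le
  have hden0 : 0 < 2 * x₀ * A ^ (K + 1) := by positivity
  calc (1 - 3 * β) / (2 * A ^ (2 * A * exp 1 * log A + 2) * exp (-(2 * A) + 1))
      ≤ μ / (2 * A ^ (2 * A * exp 1 * log A + 2) * exp (-(2 * A) + 1)) :=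
        div_le_div_of_nonneg_right hmass (hden0.le.trans hden)
    _ ≤ μ / (2 * x₀ * A ^ (K + 1)) :=
        div_le_div_of_nonneg_left (sum_nonneg fun x hx => (hp x (mem_filter.1 hx).1).le) hden0 hden
    _ ≤ p A := (div_le_iff₀ hden0).2 (by linarith)

/-- Explicit lower bound on the mass of the largest support point:
`p(A) ≥ (1 − 3β) / (2 A^{2Ae log A + 2} e^{−2A+1})`. -/
theorem mass_at_A_explicit_lower_bound
    (A : ℝ) (hA : Real.exp 1 ≤ A) (S : Finset ℝ) (hS : (S : Set ℝ) ⊆ Set.Icc 0 A)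
    (p : ℝ → ℝ) (hp : ∀ x ∈ S, 0 < p x) (hpsum : ∑ x ∈ S, p x = 1)
    (hAS : A ∈ S) (x₀ : ℝ) (hx₀S : x₀ ∈ S) (hx₀1 : 1 ≤ x₀) (hx₀A : x₀ < A)
    (hsecond : ∀ x ∈ S, x ≠ A → x ≤ x₀)
    (hopt : Real.log x₀ + 1 / x₀ ≤
      ∑' k : ℕ, poissonPMF x₀ k * Real.log (postMean S p (k + 1)))
    (β : ℝ) (hβ0 : 0 < β) (hβ4 : β ≤ 1 / 4)
    (hβsum : (∑ x ∈ S, if x < 1 then p x else 0) + p A ≤ 3 * β) :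
    (1 - 3 * β) /
        (2 * A ^ (2 * A * Real.exp 1 * Real.log A + 2) * Real.exp (-(2 * A) + 1))
      ≤ p A :=
  mass_at_A_explicit_lower_bound_general A hA S hS p hp hpsum hAS x₀ hx₀1 hx₀A hsecond hopt β hβsum
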